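/- arXiv:2107.09423 — 7 statements merged into one kernel-verified Lean document; each statement's English description precedes it below -/
import Mathlib

section
/- Let V be a finite set of variables, A a finite nonempty domain, and let I be a k-PAS over V and A (a function assigning to each k-element subset U of V a nonempty set I(U) ⊆ A^U). Let X ⊆ V with |X| ≤ k and suppose k ≥ |A|^|X| · l + |X| and |V| ≥ k. Then there exists f : X → A such that for every l-element subset W of V there exists a k-element subset U of V with X ∪ W ⊆ U and some g ∈ I(U) with the restriction of g to X equal to f. -/
/-- Restriction of a function `g : U → A` to a subset `W ⊆ U`. -/
def Fproj {V A : Type*} {U W : Finset V} (h : W ⊆ U) (g : {x // x ∈ U} → A) :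
    {x // x ∈ W} → A := fun x => g ⟨x.1, h x.2⟩

/-- Proposition (allows-a): if `k ≥ |A|^|X|·l + |X|`, some `f : X → A` has `l`-property `P`
for the `k`-PAS `I`. -/
theorem stmt0 {V A : Type*} [Fintype V] [DecidableEq V] [Fintype A] [Nonempty A]
    (k l : ℕ) (I : (U : Finset V) → Set ({x // x ∈ U} → A))
    (hPAS : ∀ U : Finset V, U.card = k → (I U).Nonempty)
    (X : Finset V) (hXk : X.card ≤ k)
    (hk : Fintype.card A ^ X.card * l + X.card ≤ k)
    (hV : k ≤ Fintype.card V) :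
    ∃ f : {x // x ∈ X} → A, ∀ W : Finset V, W.card = l →
      ∃ U : Finset V, U.card = k ∧ ∃ hXWU : X ∪ W ⊆ U,
        ∃ g ∈ I U, Fproj (Finset.union_subset_iff.mp hXWU).1 g = f := by
  classical
  by_contra hcon
  push_neg at hcon
  choose W hWcard hW using hcon
  set S : Finset V := X ∪ (Finset.univ : Finset ({x // x ∈ X} → A)).biUnion W with hS
  have hScard : S.card ≤ k := by
    calc S.card ≤ X.card + ((Finset.univ : Finset ({x // x ∈ X} → A)).biUnion W).card :=
          Finset.card_union_le _ _
      _ ≤ X.card + ∑ f : {x // x ∈ X} → A, (W f).card :=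
          Nat.add_le_add_left (Finset.card_biUnion_le) _
      _ = X.card + Fintype.card ({x // x ∈ X} → A) * l := by
          rw [Finset.sum_congr rfl (fun f _ => hWcard f), Finset.sum_const, Finset.card_univ,
            smul_eq_mul]
      _ = X.card + Fintype.card A ^ X.card * l := by
          rw [Fintype.card_fun, Fintype.card_coe]
      _ ≤ k := by omega
  obtain ⟨U, hSU, hUcard⟩ := Finset.exists_superset_card_eq hScard hV
  obtain ⟨g, hg⟩ := hPAS U hUcard
  have hXU : X ⊆ U := (Finset.union_subset_iff.mp (hS ▸ hSU)).1
  set f0 : {x // x ∈ X} → A := Fproj hXU g with hf0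
  have hXWU : X ∪ W f0 ⊆ U := by
    apply Finset.union_subset hXU
    refine subset_trans ?_ hSU
    refine subset_trans ?_ Finset.subset_union_right
    exact Finset.subset_biUnion_of_mem W (Finset.mem_univ f0)
  exact hW f0 U hUcard hXWU g hg rfl
end

section
/- Let I be a k-PAS over finite V and finite A with value 1 (i.e., every I(U) is a singleton). Suppose that for every v ∈ V there exists a ∈ A such that (v, a) has the l-property ¬Q: there is an l-element subset W_v ⊆ V such that for every k-element set U ⊇ {v} ∪ W_v, the unique element g of I(U) satisfies g(v) = a. Let m = ⌊k/(l+1)⌋ and assume |V| ≥ k. Then I is m-solvable: there exists s : V → A such that every m-element subset W of V extends to a k-element set U with proj_W of the element of I(U) equal to proj_W s. -/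
/-- `f` is an `m`-solution of the `k`-PAS `I`. -/
def MSolution {V A : Type*} (k m : ℕ)
    (I : (U : Finset V) → Set ({x // x ∈ U} → A)) (f : V → A) : Prop :=
  ∀ W : Finset V, W.card = m → ∃ U : Finset V, U.card = k ∧ ∃ hWU : W ⊆ U,
    ∃ g ∈ I U, Fproj hWU g = fun x => f x.1

/-- Proposition (sol): a `k`-PAS of value 1 in which every variable has a value with
`l`-property `¬Q` is `⌊k/(l+1)⌋`-solvable. -/
theorem stmt1 {V A : Type*} [Fintype V] [DecidableEq V] [Fintype A]
    (k l : ℕ) (hV : k ≤ Fintype.card V)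
    (I : (U : Finset V) → Set ({x // x ∈ U} → A))
    (hval : ∀ U : Finset V, U.card = k → ∃ g, I U = {g})
    (hQ : ∀ v : V, ∃ a : A, ∃ Wv : Finset V, Wv.card = l ∧
      ∀ U : Finset V, U.card = k → ∀ hvW : {v} ∪ Wv ⊆ U, ∀ g ∈ I U,
        g ⟨v, hvW (Finset.mem_union_left _ (Finset.mem_singleton_self v))⟩ = a) :
    ∃ s : V → A, MSolution k (k / (l + 1)) I s := by
  choose a Wv hWvcard hprop using hQ
  refine ⟨a, ?_⟩
  intro W hW
  set m := k / (l + 1) with hm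
  set T : Finset V := W ∪ W.biUnion Wv with hT
  have hTcard : T.card ≤ k := by
    calc T.card ≤ W.card + (W.biUnion Wv).card := Finset.card_union_le _ _
    _ ≤ W.card + W.card * l := by
        have := Finset.card_biUnion_le (s := W) (t := Wv)
        have h2 : ∑ v ∈ W, (Wv v).card = W.card * l := by
          simp [hWvcard, Finset.sum_const, Nat.mul_comm]
        omega
    _ = m * (l + 1) := by rw [hW]; ring
    _ ≤ k := Nat.div_mul_le_self k (l + 1)
  obtain ⟨U, hTU, hUcard⟩ := Finset.exists_superset_card_eq hTcard hV
  have hWU : W ⊆ U := (Finset.subset_union_left).trans hTU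
  obtain ⟨g, hg⟩ := hval U hUcard
  refine ⟨U, hUcard, hWU, g, by rw [hg]; rfl, ?_⟩
  funext x
  have hvW : {x.1} ∪ Wv x.1 ⊆ U := by
    apply Finset.union_subset
    · simp only [Finset.singleton_subset_iff]; exact hWU x.2
    · refine (Finset.subset_biUnion_of_mem Wv x.2).trans ?_
      exact (Finset.subset_union_right).trans hTU
  have := hprop x.1 U hUcard hvW g (by rw [hg]; rfl)
  simpa [Fproj] using this
end

section
/- Let A be a finite domain and d ≥ 1. If there is a function f from V to the set of at most d-element nonempty subsets of A such that for every constraint φ ⊆ A^W of a 2-CSP instance Φ over A the projection of f onto W intersects φ (i.e., combinatorial value of Φ is at most d), and f' : V → A is obtained by choosing f'(v) uniformly at random from f(v) independently for each v, then the expected fraction of constraints of Φ satisfied by f' is at least 1/d². -/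
open scoped Classical

/-- The probabilistic argument: if a `d`-valued assignment `f` hits every constraint of a
2-CSP instance `Φ`, then choosing `f'(v) ∈ f(v)` uniformly and independently satisfies,
in expectation, at least a `1/d²` fraction of the constraints. The expectation is written
as the average over all selections `g` with `g v ∈ f v` of the fraction of satisfied
constraints. -/
theorem stmt4 {V A : Type*} [Fintype V] [DecidableEq V] [Fintype A] [DecidableEq A]
    (d : ℕ) (hd : 1 ≤ d)
    (Φ : Finset (Σ W : Finset V, Set ({x // x ∈ W} → A)))
    (hΦ : Φ.Nonempty)
    (harity : ∀ c ∈ Φ, c.1.card ≤ 2)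
    (hne : ∀ c ∈ Φ, c.2.Nonempty)
    (f : V → Finset A)
    (hfne : ∀ v, (f v).Nonempty) (hfd : ∀ v, (f v).card ≤ d)
    (hcover : ∀ c ∈ Φ, ∃ h ∈ c.2, ∀ x : {y // y ∈ c.1}, h x ∈ f x.1) :
    (∑ g ∈ Finset.univ.filter (fun g : V → A => ∀ v, g v ∈ f v),
        ((Φ.filter (fun c => (fun x : {y // y ∈ c.1} => g x.1) ∈ c.2)).card : ℚ)) /
      (((Finset.univ.filter (fun g : V → A => ∀ v, g v ∈ f v)).card : ℚ) * (Φ.card : ℚ))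
      ≥ 1 / (d : ℚ) ^ 2 := by
  classical
  set S := Finset.univ.filter (fun g : V → A => ∀ v, g v ∈ f v) with hS
  have hSpi : S = Fintype.piFinset f := by
    ext g; simp [hS, Fintype.mem_piFinset]
  have hScard : S.card = ∏ v, (f v).card := by
    rw [hSpi, Fintype.card_piFinset]
  have hSpos : 0 < S.card := by
    rw [hScard]
    exact Finset.prod_pos fun v _ => (hfne v).card_pos
  -- key per-constraint bound
  have key : ∀ c ∈ Φ, S.card ≤ d ^ 2 *
      (S.filter (fun g => (fun x : {y // y ∈ c.1} => g x.1) ∈ c.2)).card := by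
    intro c hc
    obtain ⟨h, hh, hhf⟩ := hcover c hc
    set f' : V → Finset A := fun v => if hv : v ∈ c.1 then {h ⟨v, hv⟩} else f v with hf'
    have hsub : Fintype.piFinset f' ⊆
        S.filter (fun g => (fun x : {y // y ∈ c.1} => g x.1) ∈ c.2) := by
      intro g hg
      rw [Fintype.mem_piFinset] at hg
      have hgW : ∀ x : {y // y ∈ c.1}, g x.1 = h x := by
        intro x
        have := hg x.1
        rw [hf'] at this
        simp only [x.2, dif_pos, Finset.mem_singleton] at this
        simpa using this
      have hgf : ∀ v, g v ∈ f v := by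
        intro v
        by_cases hv : v ∈ c.1
        · rw [hgW ⟨v, hv⟩]; exact hhf ⟨v, hv⟩
        · have := hg v; simp only [hf'] at this; rwa [dif_neg hv] at this
      refine Finset.mem_filter.mpr ⟨Finset.mem_filter.mpr ⟨Finset.mem_univ _, hgf⟩, ?_⟩
      have : (fun x : {y // y ∈ c.1} => g x.1) = h := funext hgW
      rw [this]; exact hh
    have hcard' : (Fintype.piFinset f').card = ∏ v, (f' v).card :=
      Fintype.card_piFinset f'
    have hsplit : ∀ (F : V → Finset A),
        ∏ v, (F v).card = (∏ v ∈ c.1, (F v).card) * ∏ v ∈ c.1ᶜ, (F v).card := by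
      intro F; rw [Finset.prod_mul_prod_compl]
    have hW' : ∏ v ∈ c.1, (f' v).card = 1 := by
      apply Finset.prod_eq_one
      intro v hv
      rw [hf']; simp [hv]
    have hC' : ∏ v ∈ c.1ᶜ, (f' v).card = ∏ v ∈ c.1ᶜ, (f v).card := by
      apply Finset.prod_congr rfl
      intro v hv
      rw [Finset.mem_compl] at hv
      simp only [hf']; rw [dif_neg hv]
    have hWbound : ∏ v ∈ c.1, (f v).card ≤ d ^ 2 := by
      calc ∏ v ∈ c.1, (f v).card ≤ ∏ v ∈ c.1, d :=
            Finset.prod_le_prod (fun _ _ => Nat.zero_le _) (fun v _ => hfd v)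
        _ = d ^ c.1.card := by rw [Finset.prod_const]
        _ ≤ d ^ 2 := Nat.pow_le_pow_right hd (harity c hc)
    calc S.card = (∏ v ∈ c.1, (f v).card) * ∏ v ∈ c.1ᶜ, (f v).card := by
            rw [hScard, hsplit]
      _ ≤ d ^ 2 * ∏ v ∈ c.1ᶜ, (f v).card :=
            Nat.mul_le_mul_right _ hWbound
      _ = d ^ 2 * (Fintype.piFinset f').card := by
            rw [hcard', hsplit f', hW', hC', one_mul]
      _ ≤ d ^ 2 * (S.filter (fun g => (fun x : {y // y ∈ c.1} => g x.1) ∈ c.2)).card :=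
            Nat.mul_le_mul_left _ (Finset.card_le_card hsub)
  -- swap sums
  have swap : ∑ g ∈ S, (Φ.filter (fun c => (fun x : {y // y ∈ c.1} => g x.1) ∈ c.2)).card
      = ∑ c ∈ Φ, (S.filter (fun g => (fun x : {y // y ∈ c.1} => g x.1) ∈ c.2)).card := by
    simp_rw [Finset.card_filter]
    exact Finset.sum_comm
  have main : Φ.card * S.card ≤ d ^ 2 *
      ∑ g ∈ S, (Φ.filter (fun c => (fun x : {y // y ∈ c.1} => g x.1) ∈ c.2)).card := by
    rw [swap, Finset.mul_sum]
    calc Φ.card * S.card = ∑ _c ∈ Φ, S.card := by rw [Finset.sum_const, smul_eq_mul]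
      _ ≤ _ := Finset.sum_le_sum key
  -- conclude over ℚ
  have hΦpos : 0 < (Φ.card : ℚ) := by exact_mod_cast hΦ.card_pos
  have hSposQ : 0 < (S.card : ℚ) := by exact_mod_cast hSpos
  have hdpos : 0 < (d : ℚ) ^ 2 := by positivity
  rw [ge_iff_le, div_le_div_iff₀ hdpos (by positivity)]
  have : ((Φ.card * S.card : ℕ) : ℚ) ≤ ((d ^ 2 *
      ∑ g ∈ S, (Φ.filter (fun c => (fun x : {y // y ∈ c.1} => g x.1) ∈ c.2)).card : ℕ) : ℚ) := by
    exact_mod_cast main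
  push_cast at this
  nlinarith [this]
end

section
/- Let M be a minion on (A, B) containing no constant function, in which every member depends on at most d coordinates, and let T be the minion of all dictators on a set C with |C| ≥ 2. Then the map sending each t ∈ M to the set of dictators (coordinate projections) corresponding to the coordinates t depends on is a minion (d,1)-homomorphism from M to T. -/
/-! A function is determined by its values on the coordinates it depends on: changing the
other coordinates one at a time never changes its value. Hence a nonconstant function depends
on some coordinate, and every coordinate `j` on which a minor `s = t ∘ (· ∘ π)` depends has a
preimage `i`, `π i = j`, on which `t` depends; the dictators on `i` and `j` are then
`π`-minors of each other. -/

/-- `s` is the `π`-minor of `t`. -/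
def MinorOf {A B X Y : Type*} (t : (X → A) → B) (π : X → Y) (s : (Y → A) → B) : Prop :=
  ∀ f : Y → A, s f = t (f ∘ π)

/-- `t` depends on coordinate `i`. -/
def DependsOnCoord {A B : Type*} {n : ℕ} (t : (Fin n → A) → B) (i : Fin n) : Prop :=
  ∃ a b : Fin n → A, (∀ j, j ≠ i → a j = b j) ∧ t a ≠ t b

/-- The set of dictators on `t`'s dependency coordinates. -/
def DepDictators {A B C : Type*} {n : ℕ} (t : (Fin n → A) → B) :
    Set ((Fin n → C) → C) :=
  {g | ∃ i : Fin n, DependsOnCoord t i ∧ g = fun c => c i}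

section DependsOnCoord

variable {A B : Type*} {n : ℕ}

theorem apply_eq_of_eq_off_finset {t : (Fin n → A) → B} (s : Finset (Fin n))
    (hs : ∀ i ∈ s, ¬ DependsOnCoord t i) {a b : Fin n → A} (hab : ∀ i ∉ s, a i = b i) :
    t a = t b := by
  classical
  induction s using Finset.induction_on generalizing a with
  | empty => exact congrArg t (funext fun i => hab i (Finset.notMem_empty i))
  | insert i s hi ih =>
    have h_step : t a = t (Function.update a i (b i)) := by
      by_contra hne
      exact hs i (Finset.mem_insert_self i s)
        ⟨a, _, fun j hj => (Function.update_of_ne hj _ _).symm, hne⟩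
    refine h_step.trans (ih (fun j hj => hs j (Finset.mem_insert_of_mem hj)) fun j hj => ?_)
    by_cases hji : j = i
    · subst hji
      exact Function.update_self _ _ _
    · rw [Function.update_of_ne hji]
      exact hab j (by simp [hji, hj])

theorem apply_eq_of_forall_dependsOnCoord_imp_eq {t : (Fin n → A) → B} {a b : Fin n → A}
    (h : ∀ i, DependsOnCoord t i → a i = b i) : t a = t b := by
  classical
  exact apply_eq_of_eq_off_finset {i | ¬ DependsOnCoord t i}
    (fun i hi => (Finset.mem_filter.mp hi).2)
    (fun i hi => h i (by simpa using hi))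

theorem exists_dependsOnCoord_of_apply_ne {t : (Fin n → A) → B} {a b : Fin n → A}
    (hne : t a ≠ t b) : ∃ i, DependsOnCoord t i ∧ a i ≠ b i := by
  by_contra! h
  exact hne (apply_eq_of_forall_dependsOnCoord_imp_eq h)

theorem exists_dependsOnCoord_of_not_const [Nonempty A] {t : (Fin n → A) → B}
    (ht : ¬ ∃ b, ∀ a, t a = b) : ∃ i, DependsOnCoord t i := by
  obtain ⟨a₀⟩ : Nonempty (Fin n → A) := inferInstance
  obtain ⟨a, ha⟩ := not_forall.mp (not_exists.mp ht (t a₀))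
  obtain ⟨i, hi, -⟩ := exists_dependsOnCoord_of_apply_ne ha
  exact ⟨i, hi⟩

theorem MinorOf.exists_dependsOnCoord {m : ℕ} {π : Fin n → Fin m} {t : (Fin n → A) → B}
    {s : (Fin m → A) → B} (hts : MinorOf t π s) {j : Fin m} (hj : DependsOnCoord s j) :
    ∃ i, π i = j ∧ DependsOnCoord t i := by
  obtain ⟨a, b, hab, hne⟩ := hj
  rw [hts a, hts b] at hne
  obtain ⟨i, hi, hne_i⟩ := exists_dependsOnCoord_of_apply_ne hne
  exact ⟨i, not_imp_comm.mp (hab (π i)) hne_i, hi⟩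

theorem depDictators_eq_image (C : Type*) (t : (Fin n → A) → B) :
    DepDictators (C := C) t = (fun i (c : Fin n → C) => c i) '' {i | DependsOnCoord t i} := by
  ext g
  constructor <;> rintro ⟨i, hi, rfl⟩ <;> exact ⟨i, hi, rfl⟩

end DependsOnCoord

theorem stmt10_general {A B C : Type*} [Nonempty A] (d : ℕ)
    (M : ∀ n : ℕ, Set ((Fin n → A) → B))
    (hnoconst : ∀ n, ∀ t ∈ M n, ¬ ∃ b : B, ∀ a, t a = b)
    (hdep : ∀ n, ∀ t ∈ M n, {i | DependsOnCoord t i}.ncard ≤ d) :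
    (∀ n, ∀ t ∈ M n,
      (DepDictators (C := C) t).Nonempty ∧
      (DepDictators (C := C) t).ncard ≤ d ∧
      DepDictators (C := C) t ⊆ {g : (Fin n → C) → C | ∃ i, g = fun c => c i}) ∧
    (∀ (n m : ℕ) (π : Fin n → Fin m) (t : (Fin n → A) → B) (s : (Fin m → A) → B),
      t ∈ M n → s ∈ M m → MinorOf t π s →
      ∃ g ∈ DepDictators (C := C) t, ∃ h ∈ DepDictators (C := C) s,
        MinorOf g π h) := by
  refine ⟨fun n t ht => ⟨?_, ?_, ?_⟩, fun n m π t s _ hs hts => ?_⟩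
  · obtain ⟨i, hi⟩ := exists_dependsOnCoord_of_not_const (hnoconst n t ht)
    exact ⟨fun c => c i, i, hi, rfl⟩
  · rw [depDictators_eq_image]
    exact (Set.ncard_image_le (Set.toFinite _)).trans (hdep n t ht)
  · rintro g ⟨i, -, rfl⟩
    exact ⟨i, rfl⟩
  · obtain ⟨j, hj⟩ := exists_dependsOnCoord_of_not_const (hnoconst m s hs)
    obtain ⟨i, rfl, hi⟩ := hts.exists_dependsOnCoord hj
    exact ⟨fun c => c i, ⟨i, hi, rfl⟩, fun c => c (π i), ⟨π i, hj, rfl⟩, fun _ => rfl⟩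

/-- If a minion `M` contains no constant function and each member depends on at most `d`
coordinates, then sending `t` to the dictators on its dependency coordinates is a minion
`(d,1)`-homomorphism from `M` to the trivial minion of dictators on `C` (`|C| ≥ 2`). -/
theorem stmt10 {A B C : Type*} [Fintype A] [Nonempty A] [Fintype C]
    (hC : 2 ≤ Fintype.card C) (d : ℕ)
    (M : ∀ n : ℕ, Set ((Fin n → A) → B))
    (hne : ∃ n t, t ∈ M n)
    (hclosed : ∀ (n m : ℕ) (π : Fin n → Fin m) (t : (Fin n → A) → B),
      t ∈ M n → (fun a => t (a ∘ π)) ∈ M m)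
    (hnoconst : ∀ n, ∀ t ∈ M n, ¬ ∃ b : B, ∀ a, t a = b)
    (hdep : ∀ n, ∀ t ∈ M n, {i | DependsOnCoord t i}.ncard ≤ d) :
    (∀ n, ∀ t ∈ M n,
      (DepDictators (C := C) t).Nonempty ∧
      (DepDictators (C := C) t).ncard ≤ d ∧
      DepDictators (C := C) t ⊆ {g : (Fin n → C) → C | ∃ i, g = fun c => c i}) ∧
    (∀ (n m : ℕ) (π : Fin n → Fin m) (t : (Fin n → A) → B) (s : (Fin m → A) → B),
      t ∈ M n → s ∈ M m → MinorOf t π s →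
      ∃ g ∈ DepDictators (C := C) t, ∃ h ∈ DepDictators (C := C) s,
        MinorOf g π h) :=
  stmt10_general d M hnoconst hdep
end

section
/- Let M be a minion, C a finite nonempty set, C_1, C_2 ⊆ C, and π : C_1 → C_2 a map regarded as a binary relation π ⊆ C² (its graph). Then a pair (s_1, s_2) of C-ary members of M lies in the free relation Free_C^M(π) if and only if there exist a C_1-ary t_1 ∈ M and a C_2-ary t_2 ∈ M such that t_1 is sent to s_1 by the minor along the inclusion C_1 ↪ C, t_2 is sent to s_2 by the minor along the inclusion C_2 ↪ C, and t_2 is the π-minor of t_1 (as maps C_1 → C_2). Moreover t_1 and t_2 are unique. -/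
/-- The free relation lemma: for a minion `M`, subsets `C₁, C₂ ⊆ C` and a map
`π : C₁ → C₂` regarded as its graph `G ⊆ C²`, a pair `(s₁, s₂)` of `C`-ary members of
`M` lies in `Free_C^M(π)` (i.e., there is a `G`-ary `t ∈ M` projecting to `s₁`, `s₂` via
the two coordinate projections of `G`) iff there are `t₁ ∈ M` (`C₁`-ary) and `t₂ ∈ M`
(`C₂`-ary) with `t₁ ⟶_incl s₁`, `t₂ ⟶_incl s₂` and `t₁ ⟶_π t₂`; moreover such `t₁`
and `t₂` are unique. -/
theorem stmt12 {A B : Type} [Nonempty A]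
    (M : ∀ X : Type, Set ((X → A) → B))
    (hne : ∃ X t, t ∈ M X)
    (hclosed : ∀ (X Y : Type) (π : X → Y) (t : (X → A) → B),
      t ∈ M X → (fun f : Y → A => t (f ∘ π)) ∈ M Y)
    (C : Type) [Finite C] [Nonempty C]
    (C1 C2 : Set C) (π : ↥C1 → ↥C2)
    (s1 s2 : (C → A) → B) (hs1 : s1 ∈ M C) (hs2 : s2 ∈ M C) :
    ((∃ t ∈ M ↥{p : C × C | ∃ h : p.1 ∈ C1, (π ⟨p.1, h⟩ : C) = p.2},
        MinorOf t (fun p : ↥{p : C × C | ∃ h : p.1 ∈ C1, (π ⟨p.1, h⟩ : C) = p.2} =>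
          p.1.1) s1 ∧
        MinorOf t (fun p : ↥{p : C × C | ∃ h : p.1 ∈ C1, (π ⟨p.1, h⟩ : C) = p.2} =>
          p.1.2) s2)
      ↔
      (∃ t1 ∈ M ↥C1, ∃ t2 ∈ M ↥C2,
        MinorOf t1 (fun x : ↥C1 => (x : C)) s1 ∧
        MinorOf t2 (fun x : ↥C2 => (x : C)) s2 ∧
        MinorOf t1 π t2)) ∧
    (∀ t1 t1' : (↥C1 → A) → B, MinorOf t1 (fun x : ↥C1 => (x : C)) s1 →
      MinorOf t1' (fun x : ↥C1 => (x : C)) s1 → t1 = t1') ∧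
    (∀ t2 t2' : (↥C2 → A) → B, MinorOf t2 (fun x : ↥C2 => (x : C)) s2 →
      MinorOf t2' (fun x : ↥C2 => (x : C)) s2 → t2 = t2') := by

  classical
  set G : Set (C × C) := {p : C × C | ∃ h : p.1 ∈ C1, (π ⟨p.1, h⟩ : C) = p.2} with hG
  -- map from graph to C1
  have hρ : ∀ p : ↥G, p.1.1 ∈ C1 := fun p => p.2.choose
  let ρ : ↥G → ↥C1 := fun p => ⟨p.1.1, hρ p⟩
  have hρ2 : ∀ p : ↥G, (π (ρ p) : C) = p.1.2 := fun p => p.2.choose_spec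
  -- map from C1 to graph
  let e : ↥C1 → ↥G := fun x => ⟨(x, π x), ⟨x.2, by simp⟩⟩
  -- extension of functions on a subset
  have ext1 : ∀ g : ↥C1 → A, ∃ f : C → A, ∀ x : ↥C1, f x = g x := by
    intro g
    exact ⟨fun c => if h : c ∈ C1 then g ⟨c, h⟩ else Classical.arbitrary A,
      fun x => by simp [x.2]⟩
  have ext2 : ∀ g : ↥C2 → A, ∃ f : C → A, ∀ x : ↥C2, f x = g x := by
    intro g
    exact ⟨fun c => if h : c ∈ C2 then g ⟨c, h⟩ else Classical.arbitrary A,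
      fun x => by simp [x.2]⟩
  have uniq1 : ∀ t1 t1' : (↥C1 → A) → B, MinorOf t1 (fun x : ↥C1 => (x : C)) s1 →
      MinorOf t1' (fun x : ↥C1 => (x : C)) s1 → t1 = t1' := by
    intro t1 t1' h h'
    funext g
    obtain ⟨f, hf⟩ := ext1 g
    have hfc : f ∘ (fun x : ↥C1 => (x : C)) = g := funext hf
    have := (h f).symm.trans (h' f)
    rwa [hfc] at this
  have uniq2 : ∀ t2 t2' : (↥C2 → A) → B, MinorOf t2 (fun x : ↥C2 => (x : C)) s2 →
      MinorOf t2' (fun x : ↥C2 => (x : C)) s2 → t2 = t2' := by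
    intro t2 t2' h h'
    funext g
    obtain ⟨f, hf⟩ := ext2 g
    have hfc : f ∘ (fun x : ↥C2 => (x : C)) = g := funext hf
    have := (h f).symm.trans (h' f)
    rwa [hfc] at this
  refine ⟨⟨?_, ?_⟩, uniq1, uniq2⟩
  · rintro ⟨t, htM, h1, h2⟩
    refine ⟨fun g => t (g ∘ ρ), hclosed _ _ ρ t htM,
      fun g => (fun g' => t (g' ∘ ρ)) (g ∘ π), hclosed _ _ π _ (hclosed _ _ ρ t htM),
      ?_, ?_, fun g => rfl⟩
    · intro f
      exact h1 f
    · intro f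
      have := h2 f
      rw [this]
      congr 1
      funext p
      simp only [Function.comp]
      rw [hρ2 p]
  · rintro ⟨t1, ht1M, t2, ht2M, h1, h2, h12⟩
    refine ⟨fun f => t1 (f ∘ e), hclosed _ _ e t1 ht1M, ?_, ?_⟩
    · intro f
      exact h1 f
    · intro f
      have := h2 f
      rw [this, h12]
      rfl
end

section
/- Base case of the Main Theorem for value 1 and two layers: for every finite domain A and every m there exist k_0 ≥ k_1 ≥ m such that whenever (I_0, I_1) is a consistent pair of PASes over V and A of arities k_0, k_1, both of value 1, then I_0 or I_1 has an m-solution. -/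
/-- Base case of the Main Theorem for value 1 and two layers: for every finite `A` and
every `m` there are `k₀ ≥ k₁ ≥ m` such that every consistent pair `(I₀, I₁)` of PASes of
arities `k₀, k₁` and value 1 has an `m`-solution (of `I₀` or of `I₁`). -/
theorem stmt15 (A : Type) [Fintype A] [Nonempty A] (m : ℕ) :
    ∃ k0 k1 : ℕ, m ≤ k1 ∧ k1 ≤ k0 ∧
      ∀ (V : Type) [Fintype V] [DecidableEq V], k0 ≤ Fintype.card V →
        ∀ I0 I1 : (U : Finset V) → Set ({x // x ∈ U} → A),
          (∀ U : Finset V, U.card = k0 → ∃ g, I0 U = {g}) →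
          (∀ U : Finset V, U.card = k1 → ∃ g, I1 U = {g}) →
          (∀ (U0 U1 : Finset V) (h01 : U1 ⊆ U0), U0.card = k0 → U1.card = k1 →
            ∃ g ∈ I0 U0, Fproj h01 g ∈ I1 U1) →
          (∃ s : V → A, MSolution k0 m I0 s) ∨ (∃ s : V → A, MSolution k1 m I1 s) := by
  refine ⟨2 * m, m, le_rfl, by omega, ?_⟩
  intro V _ _ hcard I0 I1 hI0 hI1 hcons
  right
  -- unique element of I1 W for each m-set W
  have hsel : ∀ W : Finset V, W.card = m → ∃ g, I1 W = {g} := hI1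
  classical
  -- compatibility of the singletons
  have key : ∀ (W W' : Finset V) (hW : W.card = m) (hW' : W'.card = m)
      (v : V) (hv : v ∈ W) (hv' : v ∈ W'),
      (hsel W hW).choose ⟨v, hv⟩ = (hsel W' hW').choose ⟨v, hv'⟩ := by
    intro W W' hW hW' v hv hv'
    obtain ⟨U0, hsub, -, hU0⟩ := Finset.exists_subsuperset_card_eq (n := 2 * m)
      (Finset.subset_univ (W ∪ W'))
      (le_trans (Finset.card_union_le W W') (by omega))
      (by simpa using hcard)
    obtain ⟨g0, hg0⟩ := hI0 U0 hU0
    have hWU : W ⊆ U0 := (Finset.union_subset_iff.mp hsub).1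
    have hW'U : W' ⊆ U0 := (Finset.union_subset_iff.mp hsub).2
    have h1 : Fproj hWU g0 = (hsel W hW).choose := by
      obtain ⟨g, hg, hproj⟩ := hcons U0 W hWU hU0 hW
      rw [hg0] at hg
      rw [Set.mem_singleton_iff] at hg
      subst hg
      have := (hsel W hW).choose_spec
      rw [this, Set.mem_singleton_iff] at hproj
      exact hproj
    have h2 : Fproj hW'U g0 = (hsel W' hW').choose := by
      obtain ⟨g, hg, hproj⟩ := hcons U0 W' hW'U hU0 hW'
      rw [hg0] at hg
      rw [Set.mem_singleton_iff] at hg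
      subst hg
      have := (hsel W' hW').choose_spec
      rw [this, Set.mem_singleton_iff] at hproj
      exact hproj
    have e1 := congrFun h1 ⟨v, hv⟩
    have e2 := congrFun h2 ⟨v, hv'⟩
    simp only [Fproj] at e1 e2
    rw [← e1, ← e2]
  by_cases hm : m = 0
  · refine ⟨fun _ => Classical.arbitrary A, ?_⟩
    intro W hWcard
    have hWe : W = ∅ := Finset.card_eq_zero.mp (by omega)
    subst hWe
    obtain ⟨g, hg⟩ := hI1 ∅ (by simp [hm])
    refine ⟨∅, by simp [hm], Finset.Subset.refl _, g, by simp [hg], ?_⟩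
    funext x
    exact absurd x.2 (Finset.notMem_empty x.1)
  · -- choose for each v an m-set containing it
    have hWv : ∀ v : V, ∃ W : Finset V, v ∈ W ∧ W.card = m := by
      intro v
      obtain ⟨W, hsub, -, hW⟩ := Finset.exists_subsuperset_card_eq (n := m)
        (Finset.subset_univ {v}) (by simp; omega) (by simpa using le_trans (by omega) hcard)
      exact ⟨W, hsub (by simp), hW⟩
    choose Wv hvWv hWvcard using hWv
    refine ⟨fun v => (hsel (Wv v) (hWvcard v)).choose ⟨v, hvWv v⟩, ?_⟩
    intro W hWcard
    refine ⟨W, hWcard, Finset.Subset.refl _, (hsel W hWcard).choose,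
      ((hsel W hWcard).choose_spec).symm.subset rfl, ?_⟩
    funext x
    simpa [Fproj] using key W (Wv x.1) hWcard (hWvcard x.1) x.1 x.2 (hvWv x.1)
end

section
/- Consistency is preserved under compatible refinement: let (I_0, …, I_r) be a consistent sequence of PASes of arities k_0 ≥ … ≥ k_r, let p_0 ≥ … ≥ p_r with p_i ≤ k_i, and let ex_i map each p_i-element subset Y of V to a k_i-element superset ex_i(Y), chosen so that whenever Y_0 ⊇ Y_1 ⊇ … ⊇ Y_r (sizes p_0,…,p_r) we have ex_0(Y_0) ⊇ ex_1(Y_1) ⊇ … ⊇ ex_r(Y_r). Define J_i(Y) = proj_Y I_i(ex_i(Y)). Then (J_0, …, J_r) is a consistent sequence of PASes of arities p_0, …, p_r, with val(J_i) ≤ val(I_i). -/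
/-- Consistency of a sequence of PASes of arities `k 0 ≥ … ≥ k r`. -/
def Consistent {V A : Type*} {r : ℕ} (k : Fin (r + 1) → ℕ)
    (I : Fin (r + 1) → (U : Finset V) → Set ({x // x ∈ U} → A)) : Prop :=
  ∀ U : Fin (r + 1) → Finset V, (∀ i, (U i).card = k i) →
    (∀ i j : Fin (r + 1), i ≤ j → U j ⊆ U i) →
    ∃ i j : Fin (r + 1), ∃ _ : i < j, ∃ hsub : U j ⊆ U i,
      ∃ g ∈ I i (U i), Fproj hsub g ∈ I j (U j)

/-- Consistency is preserved under compatible refinement: refining each `I i` along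
extension maps `ex i` that respect nesting yields a consistent sequence `J` of arities
`p 0 ≥ … ≥ p r` with `val(J i) ≤ val(I i)`. -/
theorem stmt16 {V A : Type*} [Fintype V] [DecidableEq V] [Fintype A] (r : ℕ)
    (k p : Fin (r + 1) → ℕ) (hk : Antitone k) (hp : Antitone p)
    (hpk : ∀ i, p i ≤ k i)
    (I : Fin (r + 1) → (U : Finset V) → Set ({x // x ∈ U} → A))
    (hPAS : ∀ i (U : Finset V), U.card = k i → (I i U).Nonempty)
    (hcons : Consistent k I)
    (ex : Fin (r + 1) → Finset V → Finset V)
    (hex : ∀ i (Y : Finset V), Y.card = p i → Y ⊆ ex i Y ∧ (ex i Y).card = k i)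
    (hnest : ∀ Y : Fin (r + 1) → Finset V, (∀ i, (Y i).card = p i) →
      (∀ i j : Fin (r + 1), i ≤ j → Y j ⊆ Y i) →
      ∀ i j : Fin (r + 1), i ≤ j → ex j (Y j) ⊆ ex i (Y i))
    (J : Fin (r + 1) → (U : Finset V) → Set ({x // x ∈ U} → A))
    (hJ : ∀ i (Y : Finset V) (hY : Y.card = p i),
      J i Y = (fun g => Fproj (hex i Y hY).1 g) '' I i (ex i Y)) :
    Consistent p J ∧
    ∀ i (Y : Finset V), Y.card = p i →
      (J i Y).Nonempty ∧ (J i Y).ncard ≤ (I i (ex i Y)).ncard := by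
  constructor
  · intro Y hYc hYn
    obtain ⟨i, j, hij, hsub, g, hgI, hgJ⟩ :=
      hcons (fun i => ex i (Y i)) (fun i => (hex i (Y i) (hYc i)).2)
        (fun i j h => hnest Y hYc hYn i j h)
    refine ⟨i, j, hij, hYn i j hij.le, Fproj (hex i (Y i) (hYc i)).1 g, ?_, ?_⟩
    · rw [hJ i (Y i) (hYc i)]; exact ⟨g, hgI, rfl⟩
    · rw [hJ j (Y j) (hYc j)]
      exact ⟨Fproj hsub g, hgJ, rfl⟩
  · intro i Y hY
    rw [hJ i Y hY]
    constructor
    · exact (hPAS i (ex i Y) (hex i Y hY).2).image _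
    · exact Set.ncard_image_le (Set.toFinite _)
end
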